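/- arXiv:2510.13238 — 3 statements merged into one kernel-verified Lean document; each statement's English description precedes it below -/
import Mathlib

section
/- For γ, m > 0, t ∈ [0,1], δ ∈ (0,1), and f continuous on [0,t] with values in ℝ^d, one has |Ψ^m(f)(t) - (1 - e^{-γt/m}) f(t)| ≤ (2‖f‖_{∞,t} e^{-γδ/m} + sup_{t - min(t,δ) ≤ s ≤ t} |f(t) - f(s)|) · (1 - e^{-γt/m}), where Ψ^m(f)(t) = ∫₀ᵗ (γ/m) e^{-γ(t-s)/m} f(s) ds and ‖f‖_{∞,t} = sup_{0≤s≤t} |f(s)|. -/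
/-!
Since the kernel `s ↦ c e^{-c(t-s)}` (with `c = γ/m`) has total mass `1 - e^{-ct}` on `[0, t]`, the
error equals `∫₀ᵗ c e^{-c(t-s)} (f s - f t) ds`. Split at `t - min t δ`: on the far piece
`‖f s - f t‖ ≤ 2‖f‖_∞` and the kernel has mass `e^{-c min t δ} - e^{-ct} ≤ e^{-cδ} (1 - e^{-ct})`;
on the near piece `‖f s - f t‖` is at most the local oscillation and the mass is at most
`1 - e^{-ct}`.
-/

open MeasureTheory Set Real

noncomputable def expKernel (c t s : ℝ) : ℝ := c * exp (-(c * (t - s)))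

lemma continuous_expKernel (c t : ℝ) : Continuous (expKernel c t) := by
  unfold expKernel
  fun_prop

lemma expKernel_nonneg {c : ℝ} (hc : 0 ≤ c) (t s : ℝ) : 0 ≤ expKernel c t s :=
  mul_nonneg hc (exp_pos _).le

lemma hasDerivAt_exp_neg_mul_sub (c t s : ℝ) :
    HasDerivAt (fun s => exp (-(c * (t - s)))) (expKernel c t s) s := by
  have h : HasDerivAt (fun s => -(c * (t - s))) c s := by
    simpa using (((hasDerivAt_id s).const_sub t).const_mul c).fun_neg
  simpa [expKernel, mul_comm] using h.exp

lemma integral_expKernel (c t u v : ℝ) :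
    ∫ s in u..v, expKernel c t s = exp (-(c * (t - v))) - exp (-(c * (t - u))) :=
  intervalIntegral.integral_eq_sub_of_hasDerivAt (fun s _ => hasDerivAt_exp_neg_mul_sub c t s)
    ((continuous_expKernel c t).intervalIntegrable u v)

section

variable {E : Type*} [NormedAddCommGroup E] [NormedSpace ℝ E]

lemma intervalIntegrable_expKernel_smul {c t u v : ℝ} {g : ℝ → E}
    (hg : ContinuousOn g (uIcc u v)) :
    IntervalIntegrable (fun s => expKernel c t s • g s) volume u v :=
  ((continuous_expKernel c t).continuousOn.smul hg).intervalIntegrable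

lemma norm_integral_expKernel_smul_le {c t u v C : ℝ} {g : ℝ → E} (hc : 0 ≤ c)
    (huv : u ≤ v) (hC : ∀ s ∈ Icc u v, ‖g s‖ ≤ C) :
    ‖∫ s in u..v, expKernel c t s • g s‖ ≤
      C * (exp (-(c * (t - v))) - exp (-(c * (t - u)))) := by
  calc ‖∫ s in u..v, expKernel c t s • g s‖
      ≤ ∫ s in u..v, C * expKernel c t s := by
        refine intervalIntegral.norm_integral_le_of_norm_le huv ?_
          ((continuous_expKernel c t).intervalIntegrable u v |>.const_mul C)
        refine Filter.Eventually.of_forall fun s hs => ?_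
        rw [norm_smul, norm_of_nonneg (expKernel_nonneg hc t s), mul_comm]
        exact mul_le_mul_of_nonneg_right (hC s (Ioc_subset_Icc_self hs)) (expKernel_nonneg hc t s)
    _ = C * (exp (-(c * (t - v))) - exp (-(c * (t - u)))) := by
        rw [intervalIntegral.integral_const_mul, integral_expKernel]

lemma integral_expKernel_smul_sub_eq [CompleteSpace E] {c t : ℝ} {f : ℝ → E}
    (hf : ContinuousOn f (uIcc 0 t)) :
    (∫ s in (0:ℝ)..t, expKernel c t s • f s) - (1 - exp (-(c * t))) • f t =
      ∫ s in (0:ℝ)..t, expKernel c t s • (f s - f t) := by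
  have hmass : ∫ s in (0:ℝ)..t, expKernel c t s = 1 - exp (-(c * t)) := by
    simp [integral_expKernel]
  simp_rw [smul_sub]
  rw [intervalIntegral.integral_sub (intervalIntegrable_expKernel_smul hf)
    (intervalIntegrable_expKernel_smul continuousOn_const), intervalIntegral.integral_smul_const,
    hmass]

lemma norm_integral_expKernel_smul_sub_le [CompleteSpace E] {c t r M S : ℝ} {f : ℝ → E}
    (hc : 0 ≤ c) (hr : 0 ≤ r) (hrt : r ≤ t) (hf : ContinuousOn f (Icc 0 t))
    (hM : ∀ s ∈ Icc 0 t, ‖f s‖ ≤ M) (hS : ∀ s ∈ Icc (t - r) t, ‖f t - f s‖ ≤ S) :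
    ‖(∫ s in (0:ℝ)..t, expKernel c t s • f s) - (1 - exp (-(c * t))) • f t‖ ≤
      2 * M * (exp (-(c * r)) - exp (-(c * t))) + S * (1 - exp (-(c * r))) := by
  have ht : 0 ≤ t := hr.trans hrt
  have ha : 0 ≤ t - r := sub_nonneg.mpr hrt
  have hat : t - r ≤ t := sub_le_self t hr
  have hf' : ContinuousOn f (uIcc 0 t) := by rwa [uIcc_of_le ht]
  have hint := intervalIntegrable_expKernel_smul (c := c) (t := t) (g := fun s => f s - f t)
    (hf'.sub continuousOn_const)
  have hsplit : t - r ∈ uIcc 0 t := mem_uIcc_of_le ha hat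
  have hfar : ‖∫ s in (0:ℝ)..(t - r), expKernel c t s • (f s - f t)‖ ≤
      2 * M * (exp (-(c * r)) - exp (-(c * t))) := by
    have := norm_integral_expKernel_smul_le (g := fun s => f s - f t) (t := t) (C := 2 * M) hc ha
      fun s hs => by
        have hfs := hM s ⟨hs.1, hs.2.trans hat⟩
        have hft := hM t ⟨ht, le_rfl⟩
        linarith [norm_sub_le (f s) (f t)]
    simpa using this
  have hnear : ‖∫ s in (t - r)..t, expKernel c t s • (f s - f t)‖ ≤
      S * (1 - exp (-(c * r))) := by
    have := norm_integral_expKernel_smul_le (g := fun s => f s - f t) (t := t) (C := S) hc hat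
      fun s hs => by rw [norm_sub_rev]; exact hS s hs
    simpa using this
  rw [integral_expKernel_smul_sub_eq hf', ← intervalIntegral.integral_add_adjacent_intervals
    (hint.mono_set (uIcc_subset_uIcc_left hsplit)) (hint.mono_set (uIcc_subset_uIcc_right hsplit))]
  exact (norm_add_le _ _).trans (add_le_add hfar hnear)

end

lemma exp_neg_mul_min_sub_le {c t δ : ℝ} (hc : 0 ≤ c) (ht : 0 ≤ t) (hδ : 0 ≤ δ) :
    exp (-(c * min t δ)) - exp (-(c * t)) ≤ exp (-(c * δ)) * (1 - exp (-(c * t))) := by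
  have hexp_t : exp (-(c * t)) ≤ 1 := exp_le_one_iff.mpr (by nlinarith)
  rcases le_total t δ with htδ | hδt
  · rw [min_eq_left htδ, sub_self]
    exact mul_nonneg (exp_pos _).le (sub_nonneg.mpr hexp_t)
  · have hexp_δ : exp (-(c * δ)) ≤ 1 := exp_le_one_iff.mpr (by nlinarith)
    rw [min_eq_right hδt]
    nlinarith [exp_pos (-(c * t))]

theorem psi_approx_identity {d : ℕ} (γ m t δ : ℝ) (hγ : 0 < γ) (hm : 0 < m)
    (ht : t ∈ Set.Icc (0:ℝ) 1) (hδ : δ ∈ Set.Ioo (0:ℝ) 1)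
    (f : ℝ → EuclideanSpace ℝ (Fin d)) (hf : ContinuousOn f (Set.Icc 0 t)) :
    ‖(∫ s in (0:ℝ)..t, ((γ / m) * Real.exp (-(γ * (t - s)) / m)) • f s)
        - (1 - Real.exp (-(γ * t) / m)) • f t‖ ≤
      (2 * sSup ((fun s => ‖f s‖) '' Set.Icc (0:ℝ) t) * Real.exp (-(γ * δ) / m)
          + sSup ((fun s => ‖f t - f s‖) '' Set.Icc (t - min t δ) t))
        * (1 - Real.exp (-(γ * t) / m)) := by
  obtain ⟨ht0, -⟩ := ht
  have hc : 0 ≤ γ / m := (div_pos hγ hm).le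
  have hr : 0 ≤ min t δ := le_min ht0 hδ.1.le
  have hexp : ∀ x, -(γ * x) / m = -(γ / m * x) := fun x => by ring
  have hK : ∀ s, γ / m * exp (-(γ / m * (t - s))) = expKernel (γ / m) t s := fun _ => rfl
  simp only [hexp, hK]
  set M := sSup ((fun s => ‖f s‖) '' Icc (0:ℝ) t)
  set S := sSup ((fun s => ‖f t - f s‖) '' Icc (t - min t δ) t)
  have hM : ∀ s ∈ Icc 0 t, ‖f s‖ ≤ M := fun s hs => hf.norm.le_sSup_image_Icc hs
  have hS : ∀ s ∈ Icc (t - min t δ) t, ‖f t - f s‖ ≤ S := fun s hs =>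
    (continuousOn_const.sub (hf.mono (Icc_subset_Icc_left (sub_nonneg.mpr (min_le_left t δ))))).norm
      |>.le_sSup_image_Icc hs
  have hM0 : 0 ≤ M := (norm_nonneg _).trans (hM t ⟨ht0, le_rfl⟩)
  have hS0 : 0 ≤ S := (norm_nonneg _).trans (hS t ⟨sub_le_self t hr, le_rfl⟩)
  calc _ ≤ 2 * M * (exp (-(γ / m * min t δ)) - exp (-(γ / m * t)))
          + S * (1 - exp (-(γ / m * min t δ))) :=
        norm_integral_expKernel_smul_sub_le hc hr (min_le_left t δ) hf hM hS
    _ ≤ 2 * M * (exp (-(γ / m * δ)) * (1 - exp (-(γ / m * t))))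
          + S * (1 - exp (-(γ / m * t))) := by
        gcongr
        · exact exp_neg_mul_min_sub_le hc ht0 hδ.1.le
        · exact min_le_left t δ
    _ = (2 * M * exp (-(γ / m * δ)) + S) * (1 - exp (-(γ / m * t))) := by ring
end

section
/- For γ, m > 0 and any continuous f : [0,1] → ℝ^d with f(0) = 0, and any δ ∈ (0,1), sup_{0≤t≤1} |Ψ^m(f)(t) - f(t)| ≤ 3‖f‖_∞ e^{-γδ/m} + 2 sup_{|t-s|≤δ, t,s∈[0,1]} |f(t) - f(s)|, where Ψ^m(f)(t) = ∫₀ᵗ (γ/m) e^{-γ(t-s)/m} f(s) ds. -/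
/-!
With the kernel `k(s) = l e^{l(s-t)}` on `[0, t]`, whose mass is `1 - e^{-lt}`, one has
`Ψf(t) - f(t) = ∫₀ᵗ k(s) (f(s) - f(t)) ds - e^{-lt} f(t)`. On `[t - δ, t]` the integrand is
bounded by the modulus of continuity `ω(δ)`; on `[0, t - δ]` by `2‖f‖_∞`, where the kernel has mass
at most `e^{-lδ}`. The boundary term is at most `e^{-lδ}‖f‖_∞` when `t > δ`, and at most
`‖f(t) - f(0)‖ ≤ ω(δ)` when `t ≤ δ`.
-/

open MeasureTheory Set

section ExpKernel

variable {E : Type*} [NormedAddCommGroup E] [NormedSpace ℝ E] {l t : ℝ}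

theorem integral_mul_exp_mul_sub (l t a b : ℝ) :
    ∫ s in a..b, l * Real.exp (l * (s - t)) = Real.exp (l * (b - t)) - Real.exp (l * (a - t)) := by
  refine intervalIntegral.integral_eq_sub_of_hasDerivAt (f := fun s => Real.exp (l * (s - t)))
    (fun s _ => ?_) (Continuous.intervalIntegrable (by fun_prop) _ _)
  simpa [mul_comm] using (((hasDerivAt_id s).sub_const t).const_mul l).exp

theorem intervalIntegrable_mul_exp_smul {g : ℝ → E} {a b : ℝ} (hg : ContinuousOn g (uIcc a b)) :
    IntervalIntegrable (fun s => (l * Real.exp (l * (s - t))) • g s) volume a b :=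
  (ContinuousOn.smul (by fun_prop) hg).intervalIntegrable

theorem norm_integral_mul_exp_smul_le (hl : 0 ≤ l) {g : ℝ → E} {a b B : ℝ} (hab : a ≤ b)
    (hB : ∀ s ∈ Icc a b, ‖g s‖ ≤ B) :
    ‖∫ s in a..b, (l * Real.exp (l * (s - t))) • g s‖ ≤ B * Real.exp (l * (b - t)) := by
  have hB0 : 0 ≤ B := (norm_nonneg _).trans (hB a (left_mem_Icc.2 hab))
  calc ‖∫ s in a..b, (l * Real.exp (l * (s - t))) • g s‖
      ≤ ∫ s in a..b, B * (l * Real.exp (l * (s - t))) := by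
        refine intervalIntegral.norm_integral_le_of_norm_le hab (ae_of_all _ fun s hs => ?_)
          (Continuous.intervalIntegrable (by fun_prop) _ _)
        rw [norm_smul, Real.norm_of_nonneg (by positivity), mul_comm]
        gcongr
        exact hB s (Ioc_subset_Icc_self hs)
    _ = B * (Real.exp (l * (b - t)) - Real.exp (l * (a - t))) := by
        rw [intervalIntegral.integral_const_mul, integral_mul_exp_mul_sub]
    _ ≤ B * Real.exp (l * (b - t)) := by
        gcongr
        exact sub_le_self _ (Real.exp_pos _).le

theorem integral_mul_exp_smul_sub_self [CompleteSpace E] {f : ℝ → E} {a : ℝ}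
    (hf : ContinuousOn f (uIcc a t)) :
    (∫ s in a..t, (l * Real.exp (l * (s - t))) • f s) - f t =
      (∫ s in a..t, (l * Real.exp (l * (s - t))) • (f s - f t)) - Real.exp (l * (a - t)) • f t := by
  have hconst : ContinuousOn (fun _ : ℝ => f t) (uIcc a t) := continuousOn_const
  simp only [smul_sub]
  rw [intervalIntegral.integral_sub (intervalIntegrable_mul_exp_smul hf)
    (intervalIntegrable_mul_exp_smul hconst), intervalIntegral.integral_smul_const,
    integral_mul_exp_mul_sub, sub_self, mul_zero, Real.exp_zero, sub_smul, one_smul]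
  abel

theorem norm_integral_mul_exp_smul_sub_self_le [CompleteSpace E] {f : ℝ → E} {δ M ω : ℝ}
    (hl : 0 ≤ l) (hδ : 0 ≤ δ) (ht : 0 ≤ t) (hf : ContinuousOn f (Icc 0 t)) (hf0 : f 0 = 0)
    (hM : ∀ s ∈ Icc 0 t, ‖f s‖ ≤ M) (hω : ∀ s ∈ Icc 0 t, t - s ≤ δ → ‖f s - f t‖ ≤ ω) :
    ‖(∫ s in 0..t, (l * Real.exp (l * (s - t))) • f s) - f t‖ ≤
      3 * M * Real.exp (-(l * δ)) + 2 * ω := by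
  rw [integral_mul_exp_smul_sub_self (by rwa [uIcc_of_le ht])]
  have hM0 : 0 ≤ M := (norm_nonneg _).trans (hM 0 (left_mem_Icc.2 ht))
  have hω0 : 0 ≤ ω := by simpa using hω t (right_mem_Icc.2 ht) (by simpa using hδ)
  have hexp : 0 < Real.exp (-(l * δ)) := Real.exp_pos _
  refine (norm_sub_le _ _).trans ?_
  rw [norm_smul, Real.norm_of_nonneg (Real.exp_pos _).le, zero_sub]
  rcases le_or_gt t δ with htδ | hδt
  · have hnear : ‖∫ s in 0..t, (l * Real.exp (l * (s - t))) • (f s - f t)‖ ≤ ω := by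
      simpa using norm_integral_mul_exp_smul_le (t := t) hl ht
        fun s hs => hω s hs (by linarith [hs.1])
    have hft : ‖f t‖ ≤ ω := by
      simpa [hf0] using hω 0 (left_mem_Icc.2 ht) (by linarith)
    have hboundary : Real.exp (l * -t) * ‖f t‖ ≤ ω := by
      have hdecay : Real.exp (l * -t) ≤ 1 := Real.exp_le_one_iff.2 (by nlinarith)
      simpa using mul_le_mul hdecay hft (norm_nonneg _) zero_le_one
    linarith [mul_nonneg hM0 hexp.le]
  · have hint : ∀ a ∈ Icc 0 t, ∀ b ∈ Icc 0 t,
        IntervalIntegrable (fun s => (l * Real.exp (l * (s - t))) • (f s - f t)) volume a b :=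
      fun a ha b hb => intervalIntegrable_mul_exp_smul
        ((hf.mono (uIcc_subset_Icc ha hb)).sub continuousOn_const)
    have hmid : t - δ ∈ Icc 0 t := ⟨by linarith, by linarith⟩
    have hfar : ‖∫ s in 0..t - δ, (l * Real.exp (l * (s - t))) • (f s - f t)‖ ≤
        2 * M * Real.exp (-(l * δ)) := by
      refine (norm_integral_mul_exp_smul_le (t := t) (B := 2 * M) hl hmid.1 fun s hs => ?_).trans_eq
        (by ring_nf)
      calc ‖f s - f t‖ ≤ ‖f s‖ + ‖f t‖ := norm_sub_le _ _
        _ ≤ 2 * M := by linarith [hM s ⟨hs.1, by linarith [hs.2]⟩, hM t (right_mem_Icc.2 ht)]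
    have hnear : ‖∫ s in t - δ..t, (l * Real.exp (l * (s - t))) • (f s - f t)‖ ≤ ω := by
      simpa using norm_integral_mul_exp_smul_le (t := t) hl hmid.2
        fun s hs => hω s ⟨by linarith [hs.1], hs.2⟩ (by linarith [hs.1])
    have hboundary : Real.exp (l * -t) * ‖f t‖ ≤ M * Real.exp (-(l * δ)) := by
      have hdecay : Real.exp (l * -t) ≤ Real.exp (-(l * δ)) := Real.exp_le_exp.2 (by nlinarith)
      rw [mul_comm M]
      exact mul_le_mul hdecay (hM t (right_mem_Icc.2 ht)) (norm_nonneg _) hexp.le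
    rw [← intervalIntegral.integral_add_adjacent_intervals (hint 0 (left_mem_Icc.2 ht) _ hmid)
      (hint _ hmid t (right_mem_Icc.2 ht))]
    linarith [norm_add_le (∫ s in 0..t - δ, (l * Real.exp (l * (s - t))) • (f s - f t))
      (∫ s in t - δ..t, (l * Real.exp (l * (s - t))) • (f s - f t))]

end ExpKernel

theorem psi_uniform_approx {d : ℕ} (γ m δ : ℝ) (hγ : 0 < γ) (hm : 0 < m)
    (hδ : δ ∈ Set.Ioo (0:ℝ) 1)
    (f : ℝ → EuclideanSpace ℝ (Fin d)) (hf : ContinuousOn f (Set.Icc 0 1))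
    (hf0 : f 0 = 0) :
    ∀ t ∈ Set.Icc (0:ℝ) 1,
      ‖(∫ s in (0:ℝ)..t, ((γ / m) * Real.exp (-(γ * (t - s)) / m)) • f s) - f t‖ ≤
        3 * sSup ((fun s => ‖f s‖) '' Set.Icc (0:ℝ) 1) * Real.exp (-(γ * δ) / m)
          + 2 * sSup ((fun p : ℝ × ℝ => ‖f p.1 - f p.2‖) ''
              {p : ℝ × ℝ | p.1 ∈ Set.Icc (0:ℝ) 1 ∧ p.2 ∈ Set.Icc (0:ℝ) 1 ∧ |p.1 - p.2| ≤ δ}) := by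
  intro t ht
  have hsub : Icc 0 t ⊆ Icc (0:ℝ) 1 := Icc_subset_Icc_right ht.2
  have hM : ∀ s ∈ Icc 0 t, ‖f s‖ ≤ sSup ((fun s => ‖f s‖) '' Icc (0:ℝ) 1) := fun s hs =>
    le_csSup (isCompact_Icc.bddAbove_image hf.norm) (mem_image_of_mem _ (hsub hs))
  have hω : ∀ s ∈ Icc 0 t, t - s ≤ δ → ‖f s - f t‖ ≤ sSup ((fun p : ℝ × ℝ => ‖f p.1 - f p.2‖) ''
      {p : ℝ × ℝ | p.1 ∈ Icc (0:ℝ) 1 ∧ p.2 ∈ Icc (0:ℝ) 1 ∧ |p.1 - p.2| ≤ δ}) := by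
    intro s hs hst
    have hbdd : BddAbove ((fun p : ℝ × ℝ => ‖f p.1 - f p.2‖) '' Icc 0 1 ×ˢ Icc 0 1) :=
      (isCompact_Icc.prod isCompact_Icc).bddAbove_image
        ((hf.comp continuousOn_fst mapsTo_fst_prod).sub
          (hf.comp continuousOn_snd mapsTo_snd_prod)).norm
    refine le_csSup (hbdd.mono (image_mono ?_)) ⟨(s, t), ⟨hsub hs, ht, ?_⟩, rfl⟩
    · exact fun p hp => ⟨hp.1, hp.2.1⟩
    · rwa [abs_sub_comm, abs_of_nonneg (sub_nonneg.2 hs.2)]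
  have hkernel : ∀ s, -(γ * (t - s)) / m = γ / m * (s - t) := fun s => by ring
  have hrate : -(γ * δ) / m = -(γ / m * δ) := by ring
  simp only [hkernel, hrate]
  exact norm_integral_mul_exp_smul_sub_self_le (div_nonneg hγ.le hm.le) hδ.1.le ht.1
    (hf.mono hsub) hf0 hM hω
end

section
/- Let γ, m > 0 and define f^m(t) := 1 - e^{-γ(1-t)/m} and φ^m(t) := 1 - ∫_t^1 f^m(s)² ds for t ∈ [0,1]. Then 0 ≤ φ^m(t) - t ≤ 2m/γ for all t ∈ [0,1]. -/
/-!
Write `a = γ / m`, so that `f^m(s) = 1 - e^{a(s-1)}`. The integral of `f^m(s)²` is elementary,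
and with `E = e^{a(t-1)} ∈ (0, 1]` one finds `φ^m(t) - t = (1 - E)(3 - E) / (2a)`, which lies
between `0` and `3 / (2a) ≤ 2m / γ`.
-/

open MeasureTheory Set

theorem hasDerivAt_sq_one_sub_exp {a : ℝ} (ha : a ≠ 0) (s : ℝ) :
    HasDerivAt
      (fun x => x - 2 / a * Real.exp (a * (x - 1)) + Real.exp (a * (x - 1)) ^ 2 / (2 * a))
      ((1 - Real.exp (a * (s - 1))) ^ 2) s := by
  have hexp : HasDerivAt (fun x => Real.exp (a * (x - 1))) (Real.exp (a * (s - 1)) * a) s := by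
    simpa using (((hasDerivAt_id s).sub_const 1).const_mul a).exp
  refine (((hasDerivAt_id' s).sub (hexp.const_mul (2 / a))).add
    ((hexp.fun_pow 2).div_const (2 * a))).congr_deriv ?_
  field_simp
  ring

theorem integral_sq_one_sub_exp {a : ℝ} (ha : a ≠ 0) (t : ℝ) :
    ∫ s in t..1, (1 - Real.exp (a * (s - 1))) ^ 2 =
      1 - t - (1 - Real.exp (a * (t - 1))) * (3 - Real.exp (a * (t - 1))) / (2 * a) := by
  rw [intervalIntegral.integral_eq_sub_of_hasDerivAt (fun s _ => hasDerivAt_sq_one_sub_exp ha s)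
    (Continuous.intervalIntegrable (by fun_prop) t 1)]
  simp only [sub_self, mul_zero, Real.exp_zero]
  field_simp
  ring

theorem one_sub_integral_sq_one_sub_exp_sub_mem_Icc {a t : ℝ} (ha : 0 < a) (ht : t ≤ 1) :
    1 - (∫ s in t..1, (1 - Real.exp (a * (s - 1))) ^ 2) - t ∈ Icc 0 (3 / (2 * a)) := by
  rw [integral_sq_one_sub_exp ha.ne']
  set E := Real.exp (a * (t - 1))
  have hE_pos : 0 < E := Real.exp_pos _
  have hE_le : E ≤ 1 := Real.exp_le_one_iff.2 (mul_nonpos_of_nonneg_of_nonpos ha.le (by linarith))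
  rw [show 1 - (1 - t - (1 - E) * (3 - E) / (2 * a)) - t = (1 - E) * (3 - E) / (2 * a) by ring]
  exact ⟨by apply div_nonneg <;> nlinarith,
    div_le_div_of_nonneg_right (by nlinarith) (by positivity)⟩

theorem time_change_close_to_identity (γ m : ℝ) (hγ : 0 < γ) (hm : 0 < m) :
    ∀ t ∈ Set.Icc (0:ℝ) 1,
      0 ≤ (1 - ∫ s in t..(1:ℝ), (1 - Real.exp (-(γ * (1 - s)) / m)) ^ 2) - t ∧
      (1 - ∫ s in t..(1:ℝ), (1 - Real.exp (-(γ * (1 - s)) / m)) ^ 2) - t ≤ 2 * m / γ := by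
  intro t ht
  have hexponent : ∀ s : ℝ, -(γ * (1 - s)) / m = γ / m * (s - 1) := fun s => by ring
  simp only [hexponent]
  obtain ⟨hnonneg, hle⟩ := one_sub_integral_sq_one_sub_exp_sub_mem_Icc (div_pos hγ hm) ht.2
  refine ⟨hnonneg, hle.trans ?_⟩
  rw [div_le_div_iff₀ (by positivity) hγ]
  field_simp
  linarith
end
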